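/- arXiv:hep-th/9304122 — 2 statements merged into one kernel-verified Lean document; each statement's English description precedes it below -/
import Mathlib

section
/- Let k + 2 = p/q with gcd(p,q)=1, p,q > 0, and let j satisfy 2j + 1 = r - s·(p/q) with 1 ≤ r ≤ p-1, 0 ≤ s ≤ q-1. Set q̃ = 2p - q and m = 2r - s - 1. Then h_V := j(j+1/2)/(k+3/2) - j(j+1)/(k+2) = j(j-k-1)/((2k+3)(k+2)) = ((mp - r q̃)^2 - (p - q̃)^2)/(4 p q̃). -/
/-!
With `x = p/q = k + 2` one has `2k + 3 = 2x - 1`, `2j = r - s x - 1` and `2(j - k - 1) = r - (s + 2) x + 1`.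
Clearing the denominator `q`, the two factors of `4 j (j - k - 1)` become `A ∓ (p - q)` with
`A = r q - (s + 1) p = m p - r q̃`, and `p - q = q̃ - p`; this is the difference of squares in the
minimal-model form.
-/

theorem coset_weight_eq_factored {K : Type*} [Field K] [CharZero K] {k : K} (j : K)
    (hk₁ : k + 3 / 2 ≠ 0) (hk₂ : k + 2 ≠ 0) :
    j * (j + 1 / 2) / (k + 3 / 2) - j * (j + 1) / (k + 2)
      = j * (j - k - 1) / ((2 * k + 3) * (k + 2)) := by
  have hk₃ : 2 * k + 3 ≠ 0 := by
    contrapose! hk₁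
    linear_combination hk₁ / 2
  field_simp
  ring

theorem factored_coset_weight_eq_minimal_model {K : Type*} [Field K] [CharZero K] {p q r s k j : K}
    (hp : p ≠ 0) (hq : q ≠ 0) (hpq : 2 * p - q ≠ 0)
    (hk : k + 2 = p / q) (hj : 2 * j + 1 = r - s * (p / q)) :
    j * (j - k - 1) / ((2 * k + 3) * (k + 2))
      = (((2 * r - s - 1) * p - r * (2 * p - q)) ^ 2 - (p - (2 * p - q)) ^ 2)
          / (4 * p * (2 * p - q)) := by
  have hk₃ : 2 * k + 3 = (2 * p - q) / q := by rw [eq_sub_of_add_eq hk]; field_simp; ring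
  rw [div_eq_div_iff (mul_ne_zero (hk₃ ▸ div_ne_zero hpq hq) (hk ▸ div_ne_zero hp hq))
    (by simp [hp, hpq]), hk₃, hk]
  obtain rfl : j = (r - s * (p / q) - 1) / 2 := by linear_combination hj / 2
  obtain rfl : k = p / q - 2 := eq_sub_of_add_eq hk
  field_simp
  ring

theorem statement_11_general (p q r s : ℕ) (hq : 0 < q)
    (hq2 : q < 2 * p)
    (k j : ℚ) (hk : k + 2 = (p : ℚ) / q)
    (hj : 2 * j + 1 = (r : ℚ) - (s : ℚ) * ((p : ℚ) / q)) :
    j * (j + 1/2) / (k + 3/2) - j * (j + 1) / (k + 2)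
        = j * (j - k - 1) / ((2 * k + 3) * (k + 2))
    ∧ j * (j + 1/2) / (k + 3/2) - j * (j + 1) / (k + 2)
        = ((((2 * (r : ℤ) - (s : ℤ) - 1 : ℤ) : ℚ) * (p : ℚ)
              - (r : ℚ) * ((2 * (p : ℤ) - q : ℤ) : ℚ)) ^ 2
            - ((p : ℚ) - ((2 * (p : ℤ) - q : ℤ) : ℚ)) ^ 2)
          / (4 * (p : ℚ) * ((2 * (p : ℤ) - q : ℤ) : ℚ)) := by
  have hq₀ : (q : ℚ) ≠ 0 := by positivity
  have hp₀ : (p : ℚ) ≠ 0 := by exact_mod_cast (show p ≠ 0 by omega)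
  have hqt : 2 * (p : ℚ) - q ≠ 0 := sub_ne_zero.mpr (by exact_mod_cast hq2.ne')
  have hk₂ : k + 2 ≠ 0 := hk ▸ div_ne_zero hp₀ hq₀
  have hk₁ : k + 3 / 2 ≠ 0 := by
    rw [show k + 3 / 2 = (2 * p - q) / (2 * q) by rw [eq_sub_of_add_eq hk]; field_simp; ring]
    exact div_ne_zero hqt (mul_ne_zero two_ne_zero hq₀)
  have hcoset := coset_weight_eq_factored j hk₁ hk₂
  refine ⟨hcoset, hcoset.trans ?_⟩
  push_cast
  exact factored_coset_weight_eq_minimal_model hp₀ hq₀ hqt hk hj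

/-- For `k + 2 = p/q` (coprime positive `p, q`, with `q̃ = 2p - q > 0`) and an
admissible isospin `j` with `2j + 1 = r - s·(p/q)`, `1 ≤ r ≤ p-1`, `0 ≤ s ≤ q-1`,
setting `m = 2r - s - 1`, the coset conformal weight satisfies
`h_V = j(j+1/2)/(k+3/2) - j(j+1)/(k+2) = j(j-k-1)/((2k+3)(k+2))
     = ((mp - r q̃)² - (p - q̃)²)/(4 p q̃)`. -/
theorem statement_11 (p q r s : ℕ) (hp : 0 < p) (hq : 0 < q)
    (hco : Nat.Coprime p q) (hq2 : q < 2 * p)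
    (hr1 : 1 ≤ r) (hr2 : r ≤ p - 1) (hs : s ≤ q - 1)
    (k j : ℚ) (hk : k + 2 = (p : ℚ) / q)
    (hj : 2 * j + 1 = (r : ℚ) - (s : ℚ) * ((p : ℚ) / q)) :
    j * (j + 1/2) / (k + 3/2) - j * (j + 1) / (k + 2)
        = j * (j - k - 1) / ((2 * k + 3) * (k + 2))
    ∧ j * (j + 1/2) / (k + 3/2) - j * (j + 1) / (k + 2)
        = ((((2 * (r : ℤ) - (s : ℤ) - 1 : ℤ) : ℚ) * (p : ℚ)
              - (r : ℚ) * ((2 * (p : ℤ) - q : ℤ) : ℚ)) ^ 2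
            - ((p : ℚ) - ((2 * (p : ℤ) - q : ℤ) : ℚ)) ^ 2)
          / (4 * (p : ℚ) * ((2 * (p : ℤ) - q : ℤ) : ℚ)) :=
  statement_11_general p q r s hq hq2 k j hk hj
end

section
/- For the theta functions ϑ[b/a](z, aτ) = Σ_{n∈ℤ} exp(iπ a τ (n + b/a)^2 + 2πi z (n + b/a)), the product expansion ϑ[a_1/n_1](z_1, n_1 τ)·ϑ[a_2/n_2](z_2, n_2 τ) = Σ_{d ∈ ℤ/(n_1+n_2)} ϑ[(a_1+a_2+n_1 d)/(n_1+n_2)](z_1+z_2, (n_1+n_2)τ) · ϑ[(n_1 n_2 d + n_2 a_1 - n_1 a_2)/(n_1 n_2 (n_1+n_2))](n_2 z_1 - n_1 z_2, n_1 n_2 (n_1+n_2) τ) holds for positive integers n_1, n_2 and Im τ > 0. -/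
open Complex

/-- The theta function with characteristic `c`:
`ϑ[c](z, Nτ) = Σ_{n∈ℤ} exp(iπ N τ (n+c)² + 2πi z (n+c))`. -/
noncomputable def thetaChar (c N z τ : ℂ) : ℂ :=
  ∑' n : ℤ, Complex.exp ((Real.pi : ℂ) * Complex.I * N * τ * ((n : ℂ) + c) ^ 2
    + 2 * (Real.pi : ℂ) * Complex.I * z * ((n : ℂ) + c))

/-!
Expanding the product gives a sum over the lattice `ℤ²` of Gaussian terms in the two shifted
indices `A = m + c₁`, `B = n + c₂`. The quadratic form `N₁A² + N₂B²` diagonalises in the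
variables `(N₁A + N₂B)/(N₁ + N₂)` and `(A - B)/(N₁ + N₂)`, which on the lattice become
`p + const` and `q + const` once `m - n` is split as `q (N₁ + N₂) + d` with `d` a residue
modulo `N₁ + N₂`. Summing over `p, q` for each fixed `d` gives the product on the right.
-/

noncomputable def thetaSummand (N z τ x : ℂ) : ℂ :=
  cexp (Real.pi * I * N * τ * x ^ 2 + 2 * Real.pi * I * z * x)

lemma thetaSummand_mul_thetaSummand {N₁ N₂ : ℂ} (h : N₁ + N₂ ≠ 0) (z₁ z₂ τ A B : ℂ) :
    thetaSummand N₁ z₁ τ A * thetaSummand N₂ z₂ τ B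
      = thetaSummand (N₁ + N₂) (z₁ + z₂) τ ((N₁ * A + N₂ * B) / (N₁ + N₂))
        * thetaSummand (N₁ * N₂ * (N₁ + N₂)) (N₂ * z₁ - N₁ * z₂) τ ((A - B) / (N₁ + N₂)) := by
  simp only [thetaSummand, ← Complex.exp_add]
  congr 1
  field_simp
  ring

lemma thetaSummand_intCast_add (N z τ c : ℂ) (n : ℤ) :
    thetaSummand N z τ (n + c)
      = thetaSummand N z τ c * jacobiTheta₂_term n (N * τ * c + z) (N * τ) := by
  rw [thetaSummand, thetaSummand, jacobiTheta₂_term, ← Complex.exp_add]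
  congr 1
  ring

lemma summable_norm_thetaSummand {N τ : ℂ} (h : 0 < (N * τ).im) (z c : ℂ) :
    Summable fun n : ℤ => ‖thetaSummand N z τ (n + c)‖ := by
  simp_rw [thetaSummand_intCast_add, norm_mul]
  refine .mul_left _ <|
    (summable_pow_mul_jacobiTheta₂_term_bound |(N * τ * c + z).im| h 0).of_nonneg_of_le
      (fun _ => norm_nonneg _) fun n => ?_
  exact (norm_jacobiTheta₂_term_le h le_rfl le_rfl n).trans_eq (by simp)

lemma thetaChar_mul_thetaChar_eq_tsum {N₁ N₂ τ : ℂ} (h₁ : 0 < (N₁ * τ).im)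
    (h₂ : 0 < (N₂ * τ).im) (c₁ c₂ z₁ z₂ : ℂ) :
    thetaChar c₁ N₁ z₁ τ * thetaChar c₂ N₂ z₂ τ
      = ∑' x : ℤ × ℤ, thetaSummand N₁ z₁ τ (x.1 + c₁) * thetaSummand N₂ z₂ τ (x.2 + c₂) :=
  tsum_mul_tsum_of_summable_norm (summable_norm_thetaSummand h₁ _ _)
    (summable_norm_thetaSummand h₂ _ _)

lemma summable_thetaSummand_mul {N₁ N₂ τ : ℂ} (h₁ : 0 < (N₁ * τ).im)
    (h₂ : 0 < (N₂ * τ).im) (c₁ c₂ z₁ z₂ : ℂ) :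
    Summable fun x : ℤ × ℤ => thetaSummand N₁ z₁ τ (x.1 + c₁) * thetaSummand N₂ z₂ τ (x.2 + c₂) :=
  summable_mul_of_summable_norm (f := fun n : ℤ => thetaSummand N₁ z₁ τ (n + c₁))
    (g := fun n : ℤ => thetaSummand N₂ z₂ τ (n + c₂)) (summable_norm_thetaSummand h₁ _ _)
    (summable_norm_thetaSummand h₂ _ _)

lemma im_natCast_mul_pos {τ : ℂ} (hτ : 0 < τ.im) {k : ℕ} (hk : 0 < k) :
    0 < ((k : ℂ) * τ).im := by
  simpa using mul_pos (Nat.cast_pos.mpr hk) hτ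

def latticeSplitEquiv (n₁ n₂ : ℕ) [NeZero (n₁ + n₂)] : Fin (n₁ + n₂) × ℤ × ℤ ≃ ℤ × ℤ where
  toFun x := (x.2.1 + n₂ * x.2.2 + x.1, x.2.1 - n₁ * x.2.2)
  invFun y :=
    let qd := Int.divModEquiv (n₁ + n₂) (y.1 - y.2)
    (qd.2, y.2 + n₁ * qd.1, qd.1)
  left_inv := by
    rintro ⟨d, p, q⟩
    have hsplit : p + n₂ * q + d - (p - n₁ * q) = (Int.divModEquiv (n₁ + n₂)).symm (q, d) := by
      simp only [Int.divModEquiv_symm_apply]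
      push_cast
      ring
    simp only [hsplit, Equiv.apply_symm_apply]
    ring_nf
  right_inv := by
    rintro ⟨m, n⟩
    have hsplit := (Int.divModEquiv (n₁ + n₂)).symm_apply_apply (m - n)
    rw [Int.divModEquiv_symm_apply] at hsplit
    push_cast at hsplit
    ext
    · linear_combination hsplit
    · ring

lemma tsum_eq_sum_tsum_latticeSplitEquiv {E : Type*} [NormedAddCommGroup E] [CompleteSpace E]
    (n₁ n₂ : ℕ) [NeZero (n₁ + n₂)] {f : ℤ × ℤ → E} (hf : Summable f) :
    ∑' x, f x = ∑ d : Fin (n₁ + n₂), ∑' x : ℤ × ℤ, f (x.1 + n₂ * x.2 + d, x.1 - n₁ * x.2) := by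
  have hfe : Summable fun w => f (latticeSplitEquiv n₁ n₂ w) :=
    (latticeSplitEquiv n₁ n₂).summable_iff.mpr hf
  rw [← (latticeSplitEquiv n₁ n₂).tsum_eq, hfe.tsum_prod' hfe.prod_factor, tsum_fintype]
  rfl

theorem thetaChar_mul_thetaChar {n₁ n₂ : ℕ} (h₁ : 0 < n₁) (h₂ : 0 < n₂) (c₁ c₂ z₁ z₂ : ℂ)
    {τ : ℂ} (hτ : 0 < τ.im) :
    thetaChar c₁ n₁ z₁ τ * thetaChar c₂ n₂ z₂ τ
      = ∑ d : Fin (n₁ + n₂),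
          thetaChar ((n₁ * c₁ + n₂ * c₂ + n₁ * d) / (n₁ + n₂)) (n₁ + n₂) (z₁ + z₂) τ
            * thetaChar ((c₁ - c₂ + d) / (n₁ + n₂)) (n₁ * n₂ * (n₁ + n₂)) (n₂ * z₁ - n₁ * z₂) τ := by
  have : NeZero (n₁ + n₂) := ⟨by omega⟩
  have hs : 0 < ((n₁ + n₂ : ℂ) * τ).im := by
    exact_mod_cast im_natCast_mul_pos hτ (Nat.add_pos_left h₁ n₂)
  have hp : 0 < ((n₁ * n₂ * (n₁ + n₂) : ℂ) * τ).im := by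
    exact_mod_cast im_natCast_mul_pos hτ (by positivity : 0 < n₁ * n₂ * (n₁ + n₂))
  have hsum := summable_thetaSummand_mul (im_natCast_mul_pos hτ h₁) (im_natCast_mul_pos hτ h₂)
    c₁ c₂ z₁ z₂
  have hne : (n₁ + n₂ : ℂ) ≠ 0 := by exact_mod_cast (NeZero.ne (n₁ + n₂))
  simp only [thetaChar_mul_thetaChar_eq_tsum hs hp,
    thetaChar_mul_thetaChar_eq_tsum (im_natCast_mul_pos hτ h₁) (im_natCast_mul_pos hτ h₂),
    tsum_eq_sum_tsum_latticeSplitEquiv n₁ n₂ hsum]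
  refine Finset.sum_congr rfl fun d _ => tsum_congr fun x => ?_
  rw [thetaSummand_mul_thetaSummand hne]
  congr 2 <;> push_cast <;> field_simp <;> ring

/-- Theta function product expansion: for positive integers `n₁, n₂` and `Im τ > 0`,
`ϑ[a₁/n₁](z₁, n₁τ) · ϑ[a₂/n₂](z₂, n₂τ)
  = Σ_{d ∈ ℤ/(n₁+n₂)} ϑ[(a₁+a₂+n₁d)/(n₁+n₂)](z₁+z₂, (n₁+n₂)τ)
      · ϑ[(n₁n₂d + n₂a₁ - n₁a₂)/(n₁n₂(n₁+n₂))](n₂z₁ - n₁z₂, n₁n₂(n₁+n₂)τ)`. -/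
theorem statement_13 (n1 n2 : ℕ) (h1 : 0 < n1) (h2 : 0 < n2)
    (a1 a2 z1 z2 τ : ℂ) (hτ : 0 < τ.im) :
    thetaChar (a1 / n1) (n1 : ℂ) z1 τ * thetaChar (a2 / n2) (n2 : ℂ) z2 τ
      = ∑ d ∈ Finset.range (n1 + n2),
          thetaChar ((a1 + a2 + (n1 : ℂ) * d) / ((n1 : ℂ) + n2))
              ((n1 : ℂ) + n2) (z1 + z2) τ
            * thetaChar (((n1 : ℂ) * n2 * d + (n2 : ℂ) * a1 - (n1 : ℂ) * a2)
                / ((n1 : ℂ) * n2 * ((n1 : ℂ) + n2)))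
              ((n1 : ℂ) * n2 * ((n1 : ℂ) + n2)) ((n2 : ℂ) * z1 - (n1 : ℂ) * z2) τ := by
  have hn1 : (n1 : ℂ) ≠ 0 := Nat.cast_ne_zero.mpr h1.ne'
  have hn2 : (n2 : ℂ) ≠ 0 := Nat.cast_ne_zero.mpr h2.ne'
  rw [thetaChar_mul_thetaChar h1 h2 _ _ _ _ hτ, ← Fin.sum_univ_eq_sum_range]
  refine Finset.sum_congr rfl fun d _ => ?_
  congr 2
  · field_simp
  · field_simp
    ring
end
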